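/- Let k be a field, let (L, K, M) be a field correspondence over k, let Ω be an algebraically closed field extension of k of transcendence degree 1, and fix a k-algebra embedding PQ : M → Ω. Let G_gen be the connected component of the edge PQ in the full generic graph. Then for every finite subgraph H of G_gen there exists a subfield F of Ω containing PQ(M) with [F : PQ(M)] finite such that E_H ⊆ F, where E_H is the subfield of Ω generated by the images of all vertices and edges of H. In particular, every edge e of G_gen has image e(M) contained in the algebraic closure of PQ(M) inside Ω. -/
import Mathlib


/-- A field extension `F/k` has transcendence degree one iff some single element
forms a transcendence basis of `F` over `k`. -/
def HasTrdegOne (k F : Type*) [Field k] [Field F] [Algebra k F] : Prop :=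
  ∃ x : F, IsTranscendenceBasis k (fun _ : Unit => x)

section GenericGraph

variable {k M : Type*} [Field k] [Field M] [Algebra k M]
  (L K : IntermediateField k M)
  {Ω : Type*} [Field Ω] [Algebra k Ω]

/-- Two edges (that is, `k`-algebra homomorphisms `M → Ω`) of the full generic graph are
incident to a common vertex: they have the same restriction to `L` (a common blue vertex)
or the same restriction to `K` (a common red vertex). -/
def EdgeStep (e e' : M →ₐ[k] Ω) : Prop :=
  e.comp L.val = e'.comp L.val ∨ e.comp K.val = e'.comp K.val

/-- The edge `e` lies in the connected component `G_gen` of the distinguished edge `PQ`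
of the full generic graph. -/
def InGenericComponent (PQ e : M →ₐ[k] Ω) : Prop :=
  Relation.ReflTransGen (EdgeStep L K) PQ e

/-- `v` is a vertex of the connected component `G_gen` of `PQ`: it is an endpoint of some
edge of `G_gen`. -/
def InGenericComponentVertex (PQ : M →ₐ[k] Ω)
    (v : (↥L →ₐ[k] Ω) ⊕ (↥K →ₐ[k] Ω)) : Prop :=
  ∃ e : M →ₐ[k] Ω, InGenericComponent L K PQ e ∧
    (v = Sum.inl (e.comp L.val) ∨ v = Sum.inr (e.comp K.val))

/-- The subfield of `Ω` attached to a vertex of the full generic graph: the image of the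
corresponding homomorphism. -/
noncomputable def vertexField : ((↥L →ₐ[k] Ω) ⊕ (↥K →ₐ[k] Ω)) → IntermediateField k Ω
  | Sum.inl p => p.fieldRange
  | Sum.inr q => q.fieldRange

end GenericGraph


section Aux

open IntermediateField

lemma my_step {k M Ω : Type*} [Field k] [Field M] [Algebra k M] [Field Ω] [Algebra k Ω]
    (L : IntermediateField k M) [FiniteDimensional ↥L M]
    (R : IntermediateField k Ω) {b c : M →ₐ[k] Ω}
    (h : b.comp L.val = c.comp L.val)
    (IH : ∀ x : M, IsAlgebraic ↥R (b x)) (x : M) :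
    IsAlgebraic ↥R (c x) := by
  have hmem : ∀ a : ↥L, c (L.val a) ∈ algebraicClosure ↥R Ω := by
    intro a
    have hba : b (L.val a) = c (L.val a) := AlgHom.congr_fun h a
    rw [← hba]
    exact mem_algebraicClosure_iff.2 (IH _)
  let ψ : ↥L →+* ↥(algebraicClosure ↥R Ω) :=
  { toFun := fun a => ⟨c (L.val a), hmem a⟩
    map_one' := by ext; simp
    map_mul' := fun a a' => by ext; simp
    map_zero' := by ext; simp
    map_add' := fun a a' => by ext; simp }
  have hx : IsIntegral ↥L x := IsIntegral.of_finite ↥L x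
  have hP0 : minpoly ↥L x ≠ 0 := minpoly.ne_zero hx
  have key : IsAlgebraic ↥(algebraicClosure ↥R Ω) (c x) := by
    refine ⟨(minpoly ↥L x).map ψ, ?_, ?_⟩
    · exact (Polynomial.map_ne_zero_iff ψ.injective).2 hP0
    · have h1 : (algebraMap ↥(algebraicClosure ↥R Ω) Ω).comp ψ
          = (c : M →+* Ω).comp (algebraMap ↥L M) := by
        ext a; rfl
      have h2 := Polynomial.hom_eval₂ (minpoly ↥L x) (algebraMap ↥L M) (c : M →+* Ω) x
      rw [Polynomial.aeval_def, Polynomial.eval₂_map, h1,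
        show (c x) = (c : M →+* Ω) x from rfl, ← h2, ← Polynomial.aeval_def,
        minpoly.aeval, map_zero]
  have hm : c x ∈ algebraicClosure ↥(algebraicClosure ↥R Ω) Ω :=
    mem_algebraicClosure_iff.2 key
  rw [algebraicClosure.algebraicClosure_eq_bot] at hm
  obtain ⟨y, hy⟩ := IntermediateField.mem_bot.1 hm
  rw [← hy]
  exact mem_algebraicClosure_iff.1 y.2

lemma comp_alg {k M Ω : Type*} [Field k] [Field M] [Algebra k M] [Field Ω] [Algebra k Ω]
    (L K : IntermediateField k M) [FiniteDimensional ↥L M] [FiniteDimensional ↥K M]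
    (PQ e : M →ₐ[k] Ω) (he : InGenericComponent L K PQ e) :
    ∀ x : M, IsAlgebraic ↥PQ.fieldRange (e x) := by
  induction he with
  | refl => exact fun x => isAlgebraic_algebraMap (⟨PQ x, ⟨x, rfl⟩⟩ : PQ.fieldRange)
  | tail hab hstep IH =>
    rcases hstep with h | h
    · exact my_step L _ h IH
    · exact my_step K _ h IH

end Aux

/-- Proposition `finite_distance`.
For every finite subgraph `H` of `G_gen` (given by a finite set `SV` of vertices of
`G_gen` and a finite set `SE` of edges of `G_gen`), the subfield `E_H ⊆ Ω` generated by
the images of the vertices and edges of `H` is contained in a subfield `F` of `Ω` finite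
over `PQ(M)`.  In particular every edge of `G_gen` has image contained in the algebraic
closure of `PQ(M)` inside `Ω`. -/
theorem finite_subgraph_field_finite_over_M
    (k M : Type*) [Field k] [Field M] [Algebra k M]
    -- `M` is a finitely generated field extension of `k` of transcendence degree 1
    (hfg : (⊤ : IntermediateField k M).FG)
    (htr : HasTrdegOne k M)
    -- the two intermediate fields `L` and `K`, with `M/L` and `M/K` finite and separable
    (L K : IntermediateField k M)
    [FiniteDimensional L M] [FiniteDimensional K M]
    [Algebra.IsSeparable L M] [Algebra.IsSeparable K M]
    -- an algebraically closed extension `Ω` of `k` of transcendence degree 1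
    (Ω : Type*) [Field Ω] [Algebra k Ω] [IsAlgClosed Ω]
    (htrΩ : HasTrdegOne k Ω)
    -- a fixed `k`-algebra embedding `PQ : M → Ω`
    (PQ : M →ₐ[k] Ω) :
    (∀ (SV : Set ((↥L →ₐ[k] Ω) ⊕ (↥K →ₐ[k] Ω))) (SE : Set (M →ₐ[k] Ω)),
      SV.Finite → SE.Finite →
      (∀ v ∈ SV, InGenericComponentVertex L K PQ v) →
      (∀ e ∈ SE, InGenericComponent L K PQ e) →
      ∃ (F : IntermediateField k Ω) (h : PQ.fieldRange ≤ F),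
        FiniteDimensional PQ.fieldRange (IntermediateField.extendScalars h) ∧
        (⨆ v : SV, vertexField L K v.1) ⊔ (⨆ e : SE, (e.1).fieldRange) ≤ F) ∧
    ∀ e : M →ₐ[k] Ω, InGenericComponent L K PQ e →
      ∀ x : M, IsAlgebraic (↥PQ.fieldRange) (e x) := by
  classical
  obtain ⟨S, hS⟩ := hfg
  have part2 : ∀ e : M →ₐ[k] Ω, InGenericComponent L K PQ e →
      ∀ x : M, IsAlgebraic (↥PQ.fieldRange) (e x) := fun e he => comp_alg L K PQ e he
  refine ⟨?_, part2⟩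
  intro SV SE hSVfin hSEfin hSV hSE
  haveI : Finite ↥SV := hSVfin.to_subtype
  let f : SV → (M →ₐ[k] Ω) := fun v => (hSV v v.2).choose
  have hf1 : ∀ v : SV, InGenericComponent L K PQ (f v) := fun v => (hSV v v.2).choose_spec.1
  have hf2 : ∀ v : SV, vertexField L K v.1 ≤ (f v).fieldRange := by
    intro v
    rcases (hSV v v.2).choose_spec.2 with hv | hv
    · rw [hv]; rintro x ⟨y, rfl⟩; exact ⟨L.val y, rfl⟩
    · rw [hv]; rintro x ⟨y, rfl⟩; exact ⟨K.val y, rfl⟩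
  set ES : Set (M →ₐ[k] Ω) := insert PQ (SE ∪ Set.range f) with hES
  have hESfin : ES.Finite := (hSEfin.union (Set.finite_range f)).insert PQ
  have hEScomp : ∀ e ∈ ES, InGenericComponent L K PQ e := by
    rintro e (rfl | he | ⟨v, rfl⟩)
    · exact Relation.ReflTransGen.refl
    · exact hSE e he
    · exact hf1 v
  set T : Set Ω := ⋃ e ∈ ES, ⇑e '' (S : Set M) with hT
  have hTfin : T.Finite := hESfin.biUnion (fun e _ => (S.finite_toSet.image _))
  haveI : Finite ↥T := hTfin.to_subtype
  have halg : ∀ x ∈ T, IsIntegral ↥PQ.fieldRange x := by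
    rintro x hx
    simp only [hT, Set.mem_iUnion] at hx
    obtain ⟨e, he, m, _, rfl⟩ := hx
    exact (part2 e (hEScomp e he) m).isIntegral
  have hrange : ∀ e ∈ ES, e.fieldRange ≤ IntermediateField.adjoin k T := by
    intro e he
    rw [AlgHom.fieldRange_eq_map, ← hS, IntermediateField.adjoin_map]
    apply IntermediateField.adjoin.mono
    intro x hx
    exact Set.mem_biUnion he hx
  have hle : PQ.fieldRange ≤ IntermediateField.adjoin k T :=
    hrange PQ (Set.mem_insert _ _)
  refine ⟨IntermediateField.adjoin k T, hle, ?_, ?_⟩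
  · rw [IntermediateField.extendScalars_adjoin hle]
    exact IntermediateField.finiteDimensional_adjoin halg
  · apply sup_le
    · exact iSup_le fun v => le_trans (hf2 v)
        (hrange (f v) (Set.mem_insert_iff.2 (Or.inr (Or.inr ⟨v, rfl⟩))))
    · exact iSup_le fun e => hrange e.1 (Set.mem_insert_iff.2 (Or.inr (Or.inl e.2)))
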